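/- Let G be a finite simple graph and let G × G denote its tensor product with itself. If G contains a biclique K_{n₁,n₂} (a complete bipartite subgraph with parts of sizes n₁ and n₂) as a subgraph, then G × G contains a balanced biclique K_{n₁n₂, n₁n₂} as a subgraph. -/

import Mathlib

/-- The tensor product `G₁ × G₂`: `(a, b)` is adjacent to `(c, d)` iff
`a` is adjacent to `c` in `G₁` and `b` is adjacent to `d` in `G₂`. -/
def tensorProd {V₁ V₂ : Type*} (G₁ : SimpleGraph V₁) (G₂ : SimpleGraph V₂) :
    SimpleGraph (V₁ × V₂) where
  Adj x y := G₁.Adj x.1 y.1 ∧ G₂.Adj x.2 y.2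
  symm := ⟨fun _ _ ⟨h₁, h₂⟩ => ⟨h₁.symm, h₂.symm⟩⟩
  loopless := ⟨fun x ⟨h₁, _⟩ => h₁.ne rfl⟩

/-- If `G` contains a biclique `K_{n₁, n₂}`, then the tensor product `G × G`
contains a balanced biclique `K_{n₁ n₂, n₁ n₂}`. -/
theorem tensor_biclique {V : Type*} [Fintype V] (G : SimpleGraph V) (n₁ n₂ : ℕ)
    (h : ∃ A B : Finset V, Disjoint A B ∧ A.card = n₁ ∧ B.card = n₂ ∧
      ∀ a ∈ A, ∀ b ∈ B, G.Adj a b) :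
    ∃ A' B' : Finset (V × V), Disjoint A' B' ∧
      A'.card = n₁ * n₂ ∧ B'.card = n₁ * n₂ ∧
      ∀ a ∈ A', ∀ b ∈ B', (tensorProd G G).Adj a b := by
  obtain ⟨A, B, hAB, hA, hB, hadj⟩ := h
  refine ⟨A ×ˢ B, B ×ˢ A, ?_, ?_, ?_, ?_⟩
  · rw [Finset.disjoint_left]
    rintro ⟨x, y⟩ hx hy
    simp only [Finset.mem_product] at hx hy
    exact Finset.disjoint_left.mp hAB hx.1 hy.1
  · rw [Finset.card_product, hA, hB]
  · rw [Finset.card_product, hB, hA, Nat.mul_comm]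
  · rintro ⟨a, b⟩ hab ⟨c, d⟩ hcd
    simp only [Finset.mem_product] at hab hcd
    exact ⟨hadj a hab.1 c hcd.1, (hadj d hcd.2 b hab.2).symm⟩
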